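/- Let N_R, M ∈ ℕ with M ≥ 1, let σ² > 0, let 0 ≤ η ≤ 1, and let γ_1, …, γ_M be nonnegative reals. Let p_1, …, p_M ∈ ℂ^{N_R} with p_1 a unit vector, and let Φ, θ_1, …, θ_M ∈ ℝ be angles such that for any two distinct members α ≠ β of the list (Φ, θ_1, …, θ_M), sin α − sin β is not an even integer. For each N ∈ ℕ define the ULA steering vector a_N(θ) ∈ ℂ^N with n-th entry (1/√N)·exp(−iπ(n−1)·sin θ); define the channel H_N = ∑_{m=1}^{M} √γ_m · p_m a_N(θ_m)^H ∈ ℂ^{N_R × N}, the analog beamformer F_RF,N = [a_N(Φ), a_N(θ_1)] ∈ ℂ^{N × 2}, and the baseband beamformer F_BB = diag(1−η, η). Then the mutual information M_N = log₂( det( I_{N_R} + (1/σ²)·H_N F_RF,N F_BB F_BB^H F_RF,N^H H_N^H ) ) converges to log₂( 1 + η²γ₁/σ² ) as N → ∞. -/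

import Mathlib

/-!
The correlation `a_N(α)ᴴ a_N(β)` is the Cesàro mean `N⁻¹ ∑_{n<N} zⁿ` of the powers of
`z = exp(iπ(sin α − sin β))`, a point of the unit circle. When `z ≠ 1`, i.e. when
`sin α − sin β ∉ 2ℤ`, the partial sums are bounded by `2 / |z − 1|`, so the mean tends to `0`;
it equals `1` when `α = β`. Hence
`H_N a_N(Φ) → 0` and `H_N a_N(θ₁) → √γ₁ p₁`.

Since `F_BB` is diagonal, the covariance splits over the two beams:
`H F_RF F_BB F_BBᴴ F_RFᴴ Hᴴ = (1 − η)² (H a(Φ))(H a(Φ))ᴴ + η² (H a(θ₁))(H a(θ₁))ᴴ`,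
which therefore tends to `η² γ₁ p₁ p₁ᴴ`. By continuity of the determinant and the matrix
determinant lemma `det (I + r p₁ p₁ᴴ) = 1 + r ‖p₁‖² = 1 + r`, the mutual information tends to
`log₂ (1 + η² γ₁ / σ²)`.
-/

open Matrix Filter Topology

/-- The ULA steering vector with half-wavelength spacing: `n`-th entry
`(1/√N) · exp(−iπ n · sin θ)` for `n = 0, …, N−1` (0-indexed version of
`n = 1, …, N`). -/
noncomputable def steer (N : ℕ) (θ : ℝ) : Fin N → ℂ := fun n =>
  (1 / Real.sqrt N : ℝ) * Complex.exp (-(Complex.I * Real.pi * (n : ℕ) * Real.sin θ))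

open Complex

theorem tendsto_inv_mul_geom_sum_zero {𝕜 : Type*} [RCLike 𝕜] {z : 𝕜} (hz : ‖z‖ ≤ 1)
    (h1 : z ≠ 1) :
    Tendsto (fun N : ℕ => (N : 𝕜)⁻¹ * ∑ n ∈ Finset.range N, z ^ n) atTop (𝓝 0) := by
  refine tendsto_inv_atTop_nhds_zero_nat.zero_mul_isBoundedUnder_le
    (isBoundedUnder_of ⟨2 / ‖z - 1‖, fun N => ?_⟩)
  rw [Function.comp_apply, geom_sum_eq h1, norm_div]
  gcongr
  calc ‖z ^ N - 1‖ ≤ ‖z‖ ^ N + 1 := by simpa using norm_sub_le (z ^ N) 1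
    _ ≤ 2 := by linarith [pow_le_one₀ (n := N) (norm_nonneg z) hz]

theorem exp_pi_mul_I_ne_one {t : ℝ} (ht : ¬∃ k : ℤ, t = 2 * k) :
    exp (↑(Real.pi * t) * I) ≠ 1 := by
  rw [Ne, exp_eq_one_iff]
  rintro ⟨k, hk⟩
  refine ht ⟨k, ?_⟩
  have : ((Real.pi * t : ℝ) : ℂ) * I = ((Real.pi * (2 * k) : ℝ) : ℂ) * I := by
    rw [hk]; push_cast; ring
  exact_mod_cast mul_left_cancel₀ Real.pi_ne_zero
    (ofReal_injective (mul_right_cancel₀ I_ne_zero this))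

theorem star_steer_mul_steer (N : ℕ) (α β : ℝ) (j : Fin N) :
    star (steer N α j) * steer N β j =
      (N : ℂ)⁻¹ * exp (↑(Real.pi * (Real.sin α - Real.sin β)) * I) ^ (j : ℕ) := by
  simp only [steer, star_mul', Complex.star_def, ← exp_conj, map_neg, map_mul, conj_ofReal,
    conj_I, conj_natCast]
  rw [mul_mul_mul_comm, ← ofReal_mul, one_div, ← mul_inv, Real.mul_self_sqrt N.cast_nonneg,
    ← exp_add, ← exp_nat_mul]
  push_cast
  ring_nf

theorem star_steer_dotProduct_steer (N : ℕ) (α β : ℝ) :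
    star (steer N α) ⬝ᵥ steer N β =
      (N : ℂ)⁻¹ * ∑ n ∈ Finset.range N, exp (↑(Real.pi * (Real.sin α - Real.sin β)) * I) ^ n := by
  simp only [dotProduct, Pi.star_apply, star_steer_mul_steer, ← Finset.mul_sum]
  rw [Fin.sum_univ_eq_sum_range (fun n => exp (↑(Real.pi * (Real.sin α - Real.sin β)) * I) ^ n)]

theorem star_steer_dotProduct_steer_self {N : ℕ} (hN : N ≠ 0) (θ : ℝ) :
    star (steer N θ) ⬝ᵥ steer N θ = 1 := by
  simp [star_steer_dotProduct_steer, hN]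

theorem tendsto_star_steer_dotProduct_steer_zero {α β : ℝ}
    (h : ¬∃ k : ℤ, Real.sin α - Real.sin β = 2 * k) :
    Tendsto (fun N => star (steer N α) ⬝ᵥ steer N β) atTop (𝓝 0) := by
  simp only [star_steer_dotProduct_steer]
  exact tendsto_inv_mul_geom_sum_zero (norm_exp_ofReal_mul_I _).le (exp_pi_mul_I_ne_one h)

theorem sum_smul_vecMulVec_mulVec {ι m n R : Type*} [Fintype ι] [Fintype n] [CommRing R]
    (a : ι → R) (p : ι → m → R) (q : ι → n → R) (v : n → R) :
    (∑ i, a i • vecMulVec (p i) (q i)) *ᵥ v = ∑ i, (a i * (q i ⬝ᵥ v)) • p i := by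
  simp only [Matrix.sum_mulVec, smul_mulVec, vecMulVec_mulVec, op_smul_eq_smul, smul_smul]

theorem tendsto_sum_smul_vecMulVec_mulVec {ι m κ R : Type*} {n : κ → Type*} [Fintype ι]
    [∀ N, Fintype (n N)] [CommRing R] [TopologicalSpace R] [IsTopologicalRing R] {l : Filter κ}
    (a : ι → R) (p : ι → m → R) {q : ι → (N : κ) → n N → R} {v : (N : κ) → n N → R}
    {c : ι → R} (hc : ∀ i, Tendsto (fun N => q i N ⬝ᵥ v N) l (𝓝 (c i))) :
    Tendsto (fun N => (∑ i, a i • vecMulVec (p i) (q i N)) *ᵥ v N) l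
      (𝓝 (∑ i, (a i * c i) • p i)) := by
  simp only [sum_smul_vecMulVec_mulVec]
  exact tendsto_finsetSum _ fun i _ => ((hc i).const_mul (a i)).smul_const (p i)

noncomputable def ulaChannel {ι m : Type*} [Fintype ι] (a : ι → ℂ) (p : ι → m → ℂ)
    (θ : ι → ℝ) (N : ℕ) : Matrix m (Fin N) ℂ :=
  ∑ i, a i • vecMulVec (p i) (star (steer N (θ i)))

section ulaChannel

variable {ι m : Type*} [Fintype ι] (a : ι → ℂ) (p : ι → m → ℂ) {θ : ι → ℝ}

theorem tendsto_ulaChannel_mulVec_steer_zero {Φ : ℝ}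
    (hΦ : ∀ i, ¬∃ k : ℤ, Real.sin Φ - Real.sin (θ i) = 2 * k) :
    Tendsto (fun N => ulaChannel a p θ N *ᵥ steer N Φ) atTop (𝓝 0) := by
  simpa [ulaChannel] using tendsto_sum_smul_vecMulVec_mulVec a p (c := 0) fun i =>
    tendsto_star_steer_dotProduct_steer_zero fun ⟨k, hk⟩ => hΦ i ⟨-k, by push_cast; linarith⟩

theorem tendsto_ulaChannel_mulVec_steer_self [DecidableEq ι] (i₀ : ι)
    (hθ : ∀ i, i ≠ i₀ → ¬∃ k : ℤ, Real.sin (θ i) - Real.sin (θ i₀) = 2 * k) :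
    Tendsto (fun N => ulaChannel a p θ N *ᵥ steer N (θ i₀)) atTop (𝓝 (a i₀ • p i₀)) := by
  have hcorr : ∀ i, Tendsto (fun N => star (steer N (θ i)) ⬝ᵥ steer N (θ i₀)) atTop
      (𝓝 (if i = i₀ then 1 else 0)) := by
    intro i
    split_ifs with hi
    · subst hi
      refine tendsto_const_nhds.congr' ?_
      filter_upwards [eventually_ne_atTop 0] with N hN
      exact (star_steer_dotProduct_steer_self hN _).symm
    · exact tendsto_star_steer_dotProduct_steer_zero (hθ i hi)
  simpa [ulaChannel] using tendsto_sum_smul_vecMulVec_mulVec a p hcorr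

end ulaChannel

theorem mul_conjTranspose_eq_sum_vecMulVec {m n α : Type*} [Fintype n] [NonUnitalSemiring α]
    [StarRing α] (G : Matrix m n α) :
    G * Gᴴ = ∑ k, vecMulVec (fun i => G i k) (star fun i => G i k) := by
  ext i j
  simp [mul_apply, Matrix.sum_apply, vecMulVec_apply]

def twoCols {n α : Type*} (x y : n → α) : Matrix n (Fin 2) α :=
  of fun j k => if k = 0 then x j else y j

theorem mul_twoCols_mul_diagonal_mul_conjTranspose {m n α : Type*} [Fintype n] [CommRing α]
    [StarRing α] (H : Matrix m n α) (x y : n → α) (c₀ c₁ : α) :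
    H * twoCols x y * diagonal ![c₀, c₁] * (diagonal ![c₀, c₁])ᴴ * (twoCols x y)ᴴ * Hᴴ =
      (star c₀ * c₀) • vecMulVec (H *ᵥ x) (star (H *ᵥ x)) +
        (star c₁ * c₁) • vecMulVec (H *ᵥ y) (star (H *ᵥ y)) := by
  set G := H * twoCols x y * diagonal ![c₀, c₁]
  have hcol₀ : (fun i => G i 0) = c₀ • (H *ᵥ x) := by
    ext i; simp [G, twoCols, mul_apply, mulVec, dotProduct, mul_comm]
  have hcol₁ : (fun i => G i 1) = c₁ • (H *ᵥ y) := by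
    ext i; simp [G, twoCols, mul_apply, mulVec, dotProduct, mul_comm]
  calc _ = G * Gᴴ := by simp only [G, conjTranspose_mul, Matrix.mul_assoc]
    _ = _ := by
      rw [mul_conjTranspose_eq_sum_vecMulVec, Fin.sum_univ_two, hcol₀, hcol₁]
      simp only [star_smul, smul_vecMulVec, vecMulVec_smul, smul_smul]

theorem tendsto_smul_vecMulVec_star_add {m κ : Type*} {l : Filter κ} {x y : κ → m → ℂ}
    {u : m → ℂ} (hx : Tendsto x l (𝓝 0)) (hy : Tendsto y l (𝓝 u)) (r s : ℂ) :
    Tendsto (fun N => r • vecMulVec (x N) (star (x N)) + s • vecMulVec (y N) (star (y N))) l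
      (𝓝 (s • vecMulVec u (star u))) := by
  have hcont : Continuous fun v : m → ℂ => vecMulVec v (star v) :=
    continuous_id.matrix_vecMulVec continuous_star
  simpa using (((hcont.tendsto _).comp hx).const_smul r).add
    (((hcont.tendsto _).comp hy).const_smul s)

theorem det_one_add_vecMulVec {n R : Type*} [Fintype n] [DecidableEq n] [CommRing R]
    (u v : n → R) : det (1 + vecMulVec u v) = 1 + v ⬝ᵥ u := by
  rw [vecMulVec_eq Unit, det_one_add_replicateCol_mul_replicateRow]

theorem re_det_one_add_smul_vecMulVec_star {n : Type*} [Fintype n] [DecidableEq n]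
    {u : n → ℂ} (hu : star u ⬝ᵥ u = 1) (r : ℝ) :
    (det (1 + (r : ℂ) • vecMulVec u (star u))).re = 1 + r := by
  rw [← smul_vecMulVec, det_one_add_vecMulVec, dotProduct_smul, hu]
  simp

theorem tendsto_logb_re_det_one_add {n κ : Type*} [Fintype n] [DecidableEq n]
    {l : Filter κ} {X : κ → Matrix n n ℂ} {X₀ : Matrix n n ℂ} (hX : Tendsto X l (𝓝 X₀))
    (b : ℝ) (h : (det (1 + X₀)).re ≠ 0) :
    Tendsto (fun i => Real.logb b (det (1 + X i)).re) l
      (𝓝 (Real.logb b (det (1 + X₀)).re)) := by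
  have hcont : Continuous fun A : Matrix n n ℂ => (det (1 + A)).re :=
    continuous_re.comp (continuous_const.add continuous_id).matrix_det
  exact (Real.continuousAt_logb h).tendsto.comp ((hcont.tendsto X₀).comp hX)

theorem mmWave_ISAC_asymptotic_mutual_information_general
    (NR M : ℕ) (hM : 1 ≤ M) (σ2 : ℝ) (hσ : 0 < σ2)
    (η : ℝ)
    (γ : Fin M → ℝ) (hγ : ∀ m, 0 ≤ γ m)
    (p : Fin M → (Fin NR → ℂ))
    (hp1 : ∑ i : Fin NR, star (p ⟨0, hM⟩ i) * p ⟨0, hM⟩ i = 1)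
    (Φ : ℝ) (θ : Fin M → ℝ)
    (hΦθ : ∀ m : Fin M, ¬ ∃ k : ℤ, Real.sin Φ - Real.sin (θ m) = 2 * k)
    (hθθ : ∀ m k : Fin M, m ≠ k →
      ¬ ∃ j : ℤ, Real.sin (θ m) - Real.sin (θ k) = 2 * j)
    (H : (N : ℕ) → Matrix (Fin NR) (Fin N) ℂ)
    (hH : ∀ N : ℕ, H N = ∑ m : Fin M,
      (Real.sqrt (γ m) : ℂ) • Matrix.vecMulVec (p m) (fun j => star (steer N (θ m) j)))
    (FRF : (N : ℕ) → Matrix (Fin N) (Fin 2) ℂ)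
    (hFRF : ∀ N : ℕ, FRF N =
      Matrix.of fun j k => if k = 0 then steer N Φ j else steer N (θ ⟨0, hM⟩) j)
    (FBB : Matrix (Fin 2) (Fin 2) ℂ)
    (hFBB : FBB = Matrix.diagonal ![((1 - η : ℝ) : ℂ), (η : ℂ)]) :
    Tendsto
      (fun N : ℕ => Real.logb 2
        (Matrix.det
          (1 + ((σ2 : ℂ))⁻¹ •
            (H N * FRF N * FBB * FBBᴴ * (FRF N)ᴴ * (H N)ᴴ))).re)
      atTop (𝓝 (Real.logb 2 (1 + η ^ 2 * γ ⟨0, hM⟩ / σ2))) := by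
  set m₀ : Fin M := ⟨0, hM⟩
  set a : Fin M → ℂ := fun m => (√(γ m) : ℂ)
  have hH' : ∀ N, H N = ulaChannel a p θ N := hH
  have hF : ∀ N, FRF N = twoCols (steer N Φ) (steer N (θ m₀)) := hFRF
  have hΦ := tendsto_ulaChannel_mulVec_steer_zero a p hΦθ
  have hθ₀ := tendsto_ulaChannel_mulVec_steer_self a p m₀ fun m hm => hθθ m m₀ hm
  have hlim : ((η ^ 2 * γ m₀ / σ2 : ℝ) : ℂ) • vecMulVec (p m₀) (star (p m₀)) =
      (σ2 : ℂ)⁻¹ • ((star (η : ℂ) * η) • vecMulVec (a m₀ • p m₀) (star (a m₀ • p m₀))) := by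
    simp only [a, star_smul, smul_vecMulVec, vecMulVec_smul, smul_smul, Complex.star_def,
      conj_ofReal]
    congr 1
    rw [← ofReal_mul (√(γ m₀)), Real.mul_self_sqrt (hγ m₀)]
    push_cast
    ring
  have hcov : Tendsto (fun N => (σ2 : ℂ)⁻¹ • (H N * FRF N * FBB * FBBᴴ * (FRF N)ᴴ * (H N)ᴴ))
      atTop (𝓝 (((η ^ 2 * γ m₀ / σ2 : ℝ) : ℂ) • vecMulVec (p m₀) (star (p m₀)))) := by
    simp only [hF, hFBB, mul_twoCols_mul_diagonal_mul_conjTranspose, hH', hlim]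
    exact (tendsto_smul_vecMulVec_star_add hΦ hθ₀ _ _).const_smul _
  have hdet := re_det_one_add_smul_vecMulVec_star (u := p m₀) hp1 (η ^ 2 * γ m₀ / σ2)
  have hpos : 0 < 1 + η ^ 2 * γ m₀ / σ2 := by
    have := div_nonneg (mul_nonneg (sq_nonneg η) (hγ m₀)) hσ.le
    linarith
  rw [← hdet]
  exact tendsto_logb_re_det_one_add hcov 2 (hdet ▸ hpos.ne')

/-- Proposition 1 of the paper: in the massive antenna regime `N → ∞`, the mutual
information of the conventional mmWave-ISAC system with channel
`H_N = ∑_m √γ_m · p_m a_N(θ_m)ᴴ`, analog beamformer `F_RF,N = [a_N(Φ), a_N(θ_1)]`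
and baseband beamformer `F_BB = diag(1−η, η)` converges to `log₂(1 + η²γ₁/σ²)`. -/
theorem mmWave_ISAC_asymptotic_mutual_information
    (NR M : ℕ) (hM : 1 ≤ M) (σ2 : ℝ) (hσ : 0 < σ2)
    (η : ℝ) (hη0 : 0 ≤ η) (hη1 : η ≤ 1)
    (γ : Fin M → ℝ) (hγ : ∀ m, 0 ≤ γ m)
    (p : Fin M → (Fin NR → ℂ))
    (hp1 : ∑ i : Fin NR, star (p ⟨0, hM⟩ i) * p ⟨0, hM⟩ i = 1)
    (Φ : ℝ) (θ : Fin M → ℝ)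
    (hΦθ : ∀ m : Fin M, ¬ ∃ k : ℤ, Real.sin Φ - Real.sin (θ m) = 2 * k)
    (hθθ : ∀ m k : Fin M, m ≠ k →
      ¬ ∃ j : ℤ, Real.sin (θ m) - Real.sin (θ k) = 2 * j)
    (H : (N : ℕ) → Matrix (Fin NR) (Fin N) ℂ)
    (hH : ∀ N : ℕ, H N = ∑ m : Fin M,
      (Real.sqrt (γ m) : ℂ) • Matrix.vecMulVec (p m) (fun j => star (steer N (θ m) j)))
    (FRF : (N : ℕ) → Matrix (Fin N) (Fin 2) ℂ)
    (hFRF : ∀ N : ℕ, FRF N =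
      Matrix.of fun j k => if k = 0 then steer N Φ j else steer N (θ ⟨0, hM⟩) j)
    (FBB : Matrix (Fin 2) (Fin 2) ℂ)
    (hFBB : FBB = Matrix.diagonal ![((1 - η : ℝ) : ℂ), (η : ℂ)]) :
    Tendsto
      (fun N : ℕ => Real.logb 2
        (Matrix.det
          (1 + ((σ2 : ℂ))⁻¹ •
            (H N * FRF N * FBB * FBBᴴ * (FRF N)ᴴ * (H N)ᴴ))).re)
      atTop (𝓝 (Real.logb 2 (1 + η ^ 2 * γ ⟨0, hM⟩ / σ2))) :=
  mmWave_ISAC_asymptotic_mutual_information_general NR M hM σ2 hσ η γ hγ p hp1 Φ θ hΦθ hθθ H hH FRF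
    hFRF FBB hFBB
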